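/- arXiv:2210.13395 — 3 statements merged into one kernel-verified Lean document; each statement's English description precedes it below -/
import Mathlib

section
/- Let φ = (1+√5)/2, ℓ = 1/φ, ω = φ − √φ, a = (1−ω)/2, b = (1+ω)/2. Then a(2−ℓ) + bℓ + 2a²ℓ = 1. -/
theorem golden_bipoint_unit_cost :
    let φ : ℝ := (1 + Real.sqrt 5) / 2
    let ℓ : ℝ := 1 / φ
    let ω : ℝ := φ - Real.sqrt φ
    let a : ℝ := (1 - ω) / 2
    let b : ℝ := (1 + ω) / 2
    a * (2 - ℓ) + b * ℓ + 2 * a ^ 2 * ℓ = 1 := by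
  intro φ ℓ ω a b
  have h5 : Real.sqrt 5 ^ 2 = 5 := Real.sq_sqrt (by norm_num)
  have hφpos : (0:ℝ) < φ := by
    have : (0:ℝ) ≤ Real.sqrt 5 := Real.sqrt_nonneg 5
    simp only [φ]; linarith
  have hsφ : Real.sqrt φ ^ 2 = φ := Real.sq_sqrt hφpos.le
  have hφsq : φ ^ 2 = φ + 1 := by
    simp only [φ]; nlinarith [h5]
  have hℓ : ℓ * φ = 1 := by
    simp only [ℓ]; field_simp
  simp only [a, b, ω]
  field_simp
  nlinarith [hsφ, hφsq, hφpos, Real.sqrt_nonneg φ]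
end

section
/- Let φ = (1+√5)/2, ω = φ − √φ, r_B = ω√φ, r_C = (1−ω)√φ, ℓ = φ − 1, a = (1−ω)/2, b = (1+ω)/2. Define f(x_A, x_C, x_B) = ℓ + 2(1−x_C)(1−ℓx_A) + 2aℓ(1−x_B) + 2a·max(1−x_B−x_A, 0) on the polytope P = {(x_A,x_C,x_B) ∈ [0,1]³ : x_A·r_B + x_B·r_B + x_C·r_C = 1}. Then f(v) ≥ √φ for all v ∈ P. -/
theorem golden_integrality_gap_lower_bound :
    let φ : ℝ := (1 + Real.sqrt 5) / 2
    let ω : ℝ := φ - Real.sqrt φ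
    let rB : ℝ := ω * Real.sqrt φ
    let rC : ℝ := (1 - ω) * Real.sqrt φ
    let ℓ : ℝ := φ - 1
    let a : ℝ := (1 - ω) / 2
    ∀ xA xC xB : ℝ, xA ∈ Set.Icc (0:ℝ) 1 → xC ∈ Set.Icc (0:ℝ) 1 →
      xB ∈ Set.Icc (0:ℝ) 1 → xA * rB + xB * rB + xC * rC = 1 →
      Real.sqrt φ ≤
        ℓ + 2 * (1 - xC) * (1 - ℓ * xA) + 2 * a * ℓ * (1 - xB)
          + 2 * a * max (1 - xB - xA) 0 := by
  intro φ ω rB rC ℓ a xA xC xB hA hC hB hcon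
  obtain ⟨hA0, hA1⟩ := hA
  obtain ⟨hB0, hB1⟩ := hB
  have h5 : Real.sqrt 5 ^ 2 = 5 := Real.sq_sqrt (by norm_num)
  have h5n : 0 ≤ Real.sqrt 5 := Real.sqrt_nonneg 5
  have h5lb : (2:ℝ) ≤ Real.sqrt 5 := by nlinarith
  have h5ub : Real.sqrt 5 ≤ 2.3 := by nlinarith
  have hφ : φ = (1 + Real.sqrt 5) / 2 := rfl
  have hφpos : (0:ℝ) ≤ φ := by rw [hφ]; linarith
  have hφ2 : φ ^ 2 = φ + 1 := by rw [hφ]; linear_combination h5 / 4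
  have hs2 : Real.sqrt φ ^ 2 = φ := Real.sq_sqrt hφpos
  set s := Real.sqrt φ with hsdef
  have hs0 : (0:ℝ) ≤ s := by rw [hsdef]; exact Real.sqrt_nonneg φ
  have hs4 : s ^ 4 = s ^ 2 + 1 := by
    have : s ^ 4 = (s ^ 2) ^ 2 := by ring
    rw [this, hs2]; exact hφ2
  have hsl : (1:ℝ) ≤ s := by nlinarith [hs2, hφ]
  have hsu : s ≤ 1.3 := by nlinarith [hs2, hφ]
  have hc : 0 < 1 + s - s ^ 2 := by nlinarith
  have hω : ω = s ^ 2 - s := by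
    have h : ω = φ - Real.sqrt φ := rfl
    rw [h, ← hsdef, ← hs2]
  have hrB : rB = (s ^ 2 - s) * s := by
    have h : rB = ω * Real.sqrt φ := rfl
    rw [h, hω, ← hsdef]
  have hrC : rC = (1 - (s ^ 2 - s)) * s := by
    have h : rC = (1 - ω) * Real.sqrt φ := rfl
    rw [h, hω, ← hsdef]
  have hl : ℓ = s ^ 2 - 1 := by
    have h : ℓ = φ - 1 := rfl
    rw [h, ← hs2]
  have ha : a = (1 - (s ^ 2 - s)) / 2 := by
    have h : a = (1 - ω) / 2 := rfl
    rw [h, hω]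
  rw [hrB, hrC] at hcon
  rw [hl, ha]
  rcases le_total (1 - xB - xA) 0 with h | h
  · rw [max_eq_right h]
    have key : (s ^ 2 - 1) + 2 * (1 - xC) * (1 - (s ^ 2 - 1) * xA)
        + 2 * ((1 - (s ^ 2 - s)) / 2) * (s ^ 2 - 1) * (1 - xB)
        + 2 * ((1 - (s ^ 2 - s)) / 2) * (0:ℝ)
        = s + (1 + s - s ^ 2) * ((1 - xA) * (xA + xB - 1)) := by
      linear_combination
        ((s - s ^ 2 - s ^ 3) + xA * (s - s ^ 2 - 2 * s ^ 3 + s ^ 4 + s ^ 5)) * hcon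
        + (-1 + xA * (s + s ^ 2) + xC * (2 - s ^ 2) + xA * xC * (2 - 3 * s ^ 2 + s ^ 4)
            + xB * s ^ 2 + xA * xB * (-1 - s + 2 * s ^ 2 - s ^ 4)
            + xA ^ 2 * (-1 - s + 2 * s ^ 2 - s ^ 4)) * hs4
    rw [key]
    have hnn : 0 ≤ (1 + s - s ^ 2) * ((1 - xA) * (xA + xB - 1)) :=
      mul_nonneg hc.le (mul_nonneg (by linarith) (by linarith))
    linarith
  · rw [max_eq_left h]
    have key : (s ^ 2 - 1) + 2 * (1 - xC) * (1 - (s ^ 2 - 1) * xA)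
        + 2 * ((1 - (s ^ 2 - s)) / 2) * (s ^ 2 - 1) * (1 - xB)
        + 2 * ((1 - (s ^ 2 - s)) / 2) * (1 - xB - xA)
        = s + (1 + s - s ^ 2) * (xA * (1 - xB - xA)) := by
      linear_combination
        ((s - s ^ 2 - s ^ 3) + xA * (s - s ^ 2 - 2 * s ^ 3 + s ^ 4 + s ^ 5)) * hcon
        + (-1 + xA * (s + s ^ 2) + xC * (2 - s ^ 2) + xA * xC * (2 - 3 * s ^ 2 + s ^ 4)
            + xB * s ^ 2 + xA * xB * (-1 - s + 2 * s ^ 2 - s ^ 4)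
            + xA ^ 2 * (-1 - s + 2 * s ^ 2 - s ^ 4)) * hs4
    rw [key]
    have hnn : 0 ≤ (1 + s - s ^ 2) * (xA * (1 - xB - xA)) :=
      mul_nonneg hc.le (mul_nonneg hA0 (by linarith))
    linarith
end

section
/- Let r_B, r_C > 0 with r_B < 1 < r_B + r_C, and define the polytope P = {(x_A, x_C, x_B) ∈ [0,1]³ : x_A·r_B + x_B·r_B + x_C·r_C = 1}. Let f(x_A, x_C, x_B) = ℓ + 2(1−x_C)(1−ℓx_A) + 2aℓ(1−x_B) + 2a·max(1−x_B−x_A, 0) for constants ℓ ∈ (0,1), a ∈ (0,1). Then f attains its minimum over P at a point with at most one non-integral (i.e., strictly between 0 and 1) coordinate. -/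
/-!
Take a minimizer of the cost over the polytope and slide it along lines inside the plane
`xA rB + xB rB + xC rC = 1` on which two coordinates change and the third is frozen. On each
such line the cost is a polynomial of degree two in the line parameter with nonpositive leading
coefficient, so one of the two points where the line leaves the cube is again a minimizer; there
one of the two moving coordinates has become `0` or `1`. Moving `xA` against `xB` makes one of
them binary. If `xA` is binary, the gap term `max (1 - xB - xA) 0` is affine in `xB`, and
moving `xC` against `xB` makes a second coordinate binary; if `xB` is binary, the same happens
when moving `xA` against `xC`, where the product `(1 - xC) (1 - ℓ xA)` makes the cost concave.
-/

open Set

/-- Points are written `(xA, xC, xB)`, in the order of the statement. -/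
def gapPolytope (rB rC : ℝ) : Set (ℝ × ℝ × ℝ) :=
  Icc 0 1 ×ˢ Icc 0 1 ×ˢ Icc 0 1 ∩ {p | p.1 * rB + p.2.2 * rB + p.2.1 * rC = 1}

def gapCost (ℓ a : ℝ) : ℝ × ℝ × ℝ → ℝ
  | (xA, xC, xB) => ℓ + 2 * (1 - xC) * (1 - ℓ * xA) + 2 * a * ℓ * (1 - xB)
      + 2 * a * max (1 - xB - xA) 0

theorem mk_mem_gapPolytope {rB rC xA xC xB : ℝ} :
    (xA, xC, xB) ∈ gapPolytope rB rC ↔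
      (xA ∈ Icc 0 1 ∧ xC ∈ Icc 0 1 ∧ xB ∈ Icc 0 1) ∧ xA * rB + xB * rB + xC * rC = 1 :=
  Iff.rfl

theorem isCompact_gapPolytope (rB rC : ℝ) : IsCompact (gapPolytope rB rC) :=
  (isCompact_Icc.prod (isCompact_Icc.prod isCompact_Icc)).inter_right
    (isClosed_eq (by fun_prop) continuous_const)

theorem gapPolytope_nonempty {rB rC : ℝ} (hsum : 1 < rB + rC) :
    (gapPolytope rB rC).Nonempty := by
  have hpos : 0 < rB + rC := by linarith
  have ht : (rB + rC)⁻¹ ∈ Icc (0 : ℝ) 1 := ⟨by positivity, inv_le_one_of_one_le₀ hsum.le⟩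
  refine ⟨(0, (rB + rC)⁻¹, (rB + rC)⁻¹), ⟨⟨left_mem_Icc.2 zero_le_one, ht, ht⟩, ?_⟩⟩
  show 0 * rB + (rB + rC)⁻¹ * rB + (rB + rC)⁻¹ * rC = 1
  field_simp
  ring

theorem continuous_gapCost (ℓ a : ℝ) : Continuous (gapCost ℓ a) := by
  unfold gapCost
  fun_prop

theorem exists_isMinOn_gapCost (ℓ a : ℝ) {rB rC : ℝ} (hsum : 1 < rB + rC) :
    ∃ p ∈ gapPolytope rB rC, IsMinOn (gapCost ℓ a) (gapPolytope rB rC) p :=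
  (isCompact_gapPolytope rB rC).exists_isMinOn (gapPolytope_nonempty hsum)
    (continuous_gapCost ℓ a).continuousOn

theorem max_one_sub_sub_zero {x y : ℝ} (hx : x ∈ Icc (0 : ℝ) 1) (hx' : x ∉ Ioo (0 : ℝ) 1)
    (hy : y ∈ Icc (0 : ℝ) 1) : max (1 - x - y) 0 = (1 - x) * (1 - y) := by
  obtain rfl | rfl : x = 0 ∨ x = 1 := by
    by_contra! h
    exact hx' ⟨hx.1.lt_of_ne' h.1, hx.2.lt_of_ne h.2⟩
  · rw [max_eq_left (by linarith [hy.2])]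
    ring
  · rw [max_eq_right (by linarith [hy.1])]
    ring

theorem quadratic_nonpos_at_left_or_right {c₂ c₁ s t : ℝ} (hc₂ : c₂ ≤ 0) (hs : s ≤ 0)
    (ht : 0 ≤ t) : c₂ * s ^ 2 + c₁ * s ≤ 0 ∨ c₂ * t ^ 2 + c₁ * t ≤ 0 := by
  rcases le_total 0 c₁ with hc₁ | hc₁
  · left
    nlinarith [mul_nonpos_of_nonpos_of_nonneg hc₂ (sq_nonneg s)]
  · right
    nlinarith [mul_nonpos_of_nonpos_of_nonneg hc₂ (sq_nonneg t)]

theorem IsMinOn.left_or_right_of_concave_quadratic {α : Type*} {F : α → ℝ} {S : Set α}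
    {p q₁ q₂ : α} {c₂ c₁ s t : ℝ} (hp : IsMinOn F S p) (hc₂ : c₂ ≤ 0) (hs : s ≤ 0)
    (ht : 0 ≤ t) (h₁ : F q₁ = F p + (c₂ * s ^ 2 + c₁ * s))
    (h₂ : F q₂ = F p + (c₂ * t ^ 2 + c₁ * t)) : IsMinOn F S q₁ ∨ IsMinOn F S q₂ := by
  rcases quadratic_nonpos_at_left_or_right (c₁ := c₁) hc₂ hs ht with h | h
  · exact Or.inl <| isMinOn_iff.2 fun x hx => by linarith [isMinOn_iff.1 hp x hx]
  · exact Or.inr <| isMinOn_iff.2 fun x hx => by linarith [isMinOn_iff.1 hp x hx]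

section ExitTime

variable {y z v w : ℝ}

theorem exists_exit_time_nonneg (hy : y ∈ Icc (0 : ℝ) 1) (hz : z ∈ Icc (0 : ℝ) 1)
    (hv : 0 < v) (hw : 0 < w) :
    ∃ t, 0 ≤ t ∧ y + t * v ∈ Icc (0 : ℝ) 1 ∧ z - t * w ∈ Icc (0 : ℝ) 1 ∧
      (y + t * v ∉ Ioo (0 : ℝ) 1 ∨ z - t * w ∉ Ioo (0 : ℝ) 1) := by
  obtain ⟨hy0, hy1⟩ := hy
  obtain ⟨hz0, hz1⟩ := hz
  have hyt : min ((1 - y) / v) (z / w) * v ≤ 1 - y := (le_div_iff₀ hv).1 (min_le_left _ _)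
  have hzt : min ((1 - y) / v) (z / w) * w ≤ z := (le_div_iff₀ hw).1 (min_le_right _ _)
  have ht : 0 ≤ min ((1 - y) / v) (z / w) :=
    le_min (div_nonneg (by linarith) hv.le) (div_nonneg hz0 hw.le)
  refine ⟨_, ht, ⟨by nlinarith, by linarith⟩, ⟨by linarith, by nlinarith⟩, ?_⟩
  rcases min_choice ((1 - y) / v) (z / w) with h | h <;> rw [h]
  · left
    rw [div_mul_cancel₀ _ hv.ne', add_sub_cancel]
    exact fun h => h.2.false
  · right
    rw [div_mul_cancel₀ _ hw.ne', sub_self]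
    exact fun h => h.1.false

theorem exists_exit_time_nonpos (hy : y ∈ Icc (0 : ℝ) 1) (hz : z ∈ Icc (0 : ℝ) 1)
    (hv : 0 < v) (hw : 0 < w) :
    ∃ t ≤ 0, y + t * v ∈ Icc (0 : ℝ) 1 ∧ z - t * w ∈ Icc (0 : ℝ) 1 ∧
      (y + t * v ∉ Ioo (0 : ℝ) 1 ∨ z - t * w ∉ Ioo (0 : ℝ) 1) := by
  obtain ⟨s, hs, hz', hy', hbin⟩ := exists_exit_time_nonneg hz hy hw hv
  refine ⟨-s, neg_nonpos.2 hs, ?_⟩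
  simp only [neg_mul, ← sub_eq_add_neg, sub_neg_eq_add]
  exact ⟨hy', hz', hbin.symm⟩

end ExitTime

section Moves

variable {rB rC ℓ a : ℝ} {p : ℝ × ℝ × ℝ}

theorem exists_isMinOn_gapCost_A_or_B_binary (hp : p ∈ gapPolytope rB rC)
    (hmin : IsMinOn (gapCost ℓ a) (gapPolytope rB rC) p) :
    ∃ q ∈ gapPolytope rB rC, IsMinOn (gapCost ℓ a) (gapPolytope rB rC) q ∧
      (q.1 ∉ Ioo (0 : ℝ) 1 ∨ q.2.2 ∉ Ioo (0 : ℝ) 1) := by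
  obtain ⟨xA, xC, xB⟩ := p
  obtain ⟨⟨hA, hC, hB⟩, hcon⟩ := mk_mem_gapPolytope.1 hp
  have hF : ∀ u, gapCost ℓ a (xA + u * 1, xC, xB - u * 1) =
      gapCost ℓ a (xA, xC, xB) + (0 * u ^ 2 + 2 * ℓ * (a - (1 - xC)) * u) := by
    intro u
    simp only [gapCost]
    rw [show 1 - (xB - u * 1) - (xA + u * 1) = 1 - xB - xA by ring]
    ring
  have hmem : ∀ u, xA + u * 1 ∈ Icc (0 : ℝ) 1 → xB - u * 1 ∈ Icc (0 : ℝ) 1 →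
      (xA + u * 1, xC, xB - u * 1) ∈ gapPolytope rB rC :=
    fun u hA' hB' => mk_mem_gapPolytope.2 ⟨⟨hA', hC, hB'⟩, by linear_combination hcon⟩
  obtain ⟨s, hs, hAs, hBs, hbins⟩ := exists_exit_time_nonpos hA hB one_pos one_pos
  obtain ⟨t, ht, hAt, hBt, hbint⟩ := exists_exit_time_nonneg hA hB one_pos one_pos
  rcases hmin.left_or_right_of_concave_quadratic le_rfl hs ht (hF s) (hF t) with h | h
  · exact ⟨_, hmem s hAs hBs, h, hbins⟩
  · exact ⟨_, hmem t hAt hBt, h, hbint⟩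

theorem exists_isMinOn_gapCost_A_binary_and (hrB : 0 < rB) (hrC : 0 < rC)
    (hp : p ∈ gapPolytope rB rC) (hmin : IsMinOn (gapCost ℓ a) (gapPolytope rB rC) p)
    (hbin : p.1 ∉ Ioo (0 : ℝ) 1) :
    ∃ q ∈ gapPolytope rB rC, IsMinOn (gapCost ℓ a) (gapPolytope rB rC) q ∧
      q.1 ∉ Ioo (0 : ℝ) 1 ∧ (q.2.2 ∉ Ioo (0 : ℝ) 1 ∨ q.2.1 ∉ Ioo (0 : ℝ) 1) := by
  obtain ⟨xA, xC, xB⟩ := p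
  obtain ⟨⟨hA, hC, hB⟩, hcon⟩ := mk_mem_gapPolytope.1 hp
  have hF : ∀ u, xB + u * rC ∈ Icc (0 : ℝ) 1 →
      gapCost ℓ a (xA, xC - u * rB, xB + u * rC) = gapCost ℓ a (xA, xC, xB) +
        (0 * u ^ 2 + (2 * rB * (1 - ℓ * xA) - 2 * a * ℓ * rC - 2 * a * (1 - xA) * rC) * u) := by
    intro u hB'
    simp only [gapCost]
    rw [sub_right_comm, max_one_sub_sub_zero hA hbin hB', sub_right_comm,
      max_one_sub_sub_zero hA hbin hB]
    ring
  have hmem : ∀ u, xB + u * rC ∈ Icc (0 : ℝ) 1 → xC - u * rB ∈ Icc (0 : ℝ) 1 →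
      (xA, xC - u * rB, xB + u * rC) ∈ gapPolytope rB rC :=
    fun u hB' hC' => mk_mem_gapPolytope.2 ⟨⟨hA, hC', hB'⟩, by linear_combination hcon⟩
  obtain ⟨s, hs, hBs, hCs, hbins⟩ := exists_exit_time_nonpos hB hC hrC hrB
  obtain ⟨t, ht, hBt, hCt, hbint⟩ := exists_exit_time_nonneg hB hC hrC hrB
  rcases hmin.left_or_right_of_concave_quadratic le_rfl hs ht (hF s hBs) (hF t hBt) with h | h
  · exact ⟨_, hmem s hBs hCs, h, hbin, hbins⟩
  · exact ⟨_, hmem t hBt hCt, h, hbin, hbint⟩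

theorem exists_isMinOn_gapCost_B_binary_and (hrB : 0 < rB) (hrC : 0 < rC) (hℓ : 0 ≤ ℓ)
    (hp : p ∈ gapPolytope rB rC) (hmin : IsMinOn (gapCost ℓ a) (gapPolytope rB rC) p)
    (hbin : p.2.2 ∉ Ioo (0 : ℝ) 1) :
    ∃ q ∈ gapPolytope rB rC, IsMinOn (gapCost ℓ a) (gapPolytope rB rC) q ∧
      q.2.2 ∉ Ioo (0 : ℝ) 1 ∧ (q.1 ∉ Ioo (0 : ℝ) 1 ∨ q.2.1 ∉ Ioo (0 : ℝ) 1) := by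
  obtain ⟨xA, xC, xB⟩ := p
  obtain ⟨⟨hA, hC, hB⟩, hcon⟩ := mk_mem_gapPolytope.1 hp
  have hF : ∀ u, xA + u * rC ∈ Icc (0 : ℝ) 1 →
      gapCost ℓ a (xA + u * rC, xC - u * rB, xB) = gapCost ℓ a (xA, xC, xB) +
        (-2 * ℓ * rB * rC * u ^ 2 +
          (2 * rB * (1 - ℓ * xA) - 2 * ℓ * rC * (1 - xC) - 2 * a * (1 - xB) * rC) * u) := by
    intro u hA'
    simp only [gapCost]
    rw [max_one_sub_sub_zero hB hbin hA', max_one_sub_sub_zero hB hbin hA]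
    ring
  have hmem : ∀ u, xA + u * rC ∈ Icc (0 : ℝ) 1 → xC - u * rB ∈ Icc (0 : ℝ) 1 →
      (xA + u * rC, xC - u * rB, xB) ∈ gapPolytope rB rC :=
    fun u hA' hC' => mk_mem_gapPolytope.2 ⟨⟨hA', hC', hB⟩, by linear_combination hcon⟩
  have hc₂ : -2 * ℓ * rB * rC ≤ 0 := by nlinarith [mul_pos hrB hrC]
  obtain ⟨s, hs, hAs, hCs, hbins⟩ := exists_exit_time_nonpos hA hC hrC hrB
  obtain ⟨t, ht, hAt, hCt, hbint⟩ := exists_exit_time_nonneg hA hC hrC hrB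
  rcases hmin.left_or_right_of_concave_quadratic hc₂ hs ht (hF s hAs) (hF t hAt) with h | h
  · exact ⟨_, hmem s hAs hCs, h, hbin, hbins⟩
  · exact ⟨_, hmem t hAt hCt, h, hbin, hbint⟩

end Moves

theorem exists_isMinOn_gapCost_two_binary {rB rC ℓ a : ℝ} (hrB : 0 < rB) (hrC : 0 < rC)
    (hsum : 1 < rB + rC) (hℓ : 0 ≤ ℓ) :
    ∃ q ∈ gapPolytope rB rC, IsMinOn (gapCost ℓ a) (gapPolytope rB rC) q ∧
      ((q.1 ∉ Ioo (0 : ℝ) 1 ∧ q.2.1 ∉ Ioo (0 : ℝ) 1) ∨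
        (q.1 ∉ Ioo (0 : ℝ) 1 ∧ q.2.2 ∉ Ioo (0 : ℝ) 1) ∨
        (q.2.1 ∉ Ioo (0 : ℝ) 1 ∧ q.2.2 ∉ Ioo (0 : ℝ) 1)) := by
  obtain ⟨p, hp, hmin⟩ := exists_isMinOn_gapCost ℓ a hsum
  obtain ⟨p', hp', hmin', hA | hB⟩ := exists_isMinOn_gapCost_A_or_B_binary hp hmin
  · obtain ⟨q, hq, hqmin, hqA, hqB | hqC⟩ :=
      exists_isMinOn_gapCost_A_binary_and hrB hrC hp' hmin' hA
    · exact ⟨q, hq, hqmin, Or.inr (Or.inl ⟨hqA, hqB⟩)⟩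
    · exact ⟨q, hq, hqmin, Or.inl ⟨hqA, hqC⟩⟩
  · obtain ⟨q, hq, hqmin, hqB, hqA | hqC⟩ :=
      exists_isMinOn_gapCost_B_binary_and hrB hrC hℓ hp' hmin' hB
    · exact ⟨q, hq, hqmin, Or.inr (Or.inl ⟨hqA, hqB⟩)⟩
    · exact ⟨q, hq, hqmin, Or.inr (Or.inr ⟨hqC, hqB⟩)⟩

theorem extremal_minimizer_of_gap_cost_general
    (rB rC ℓ a : ℝ) (hrB : 0 < rB) (hrC : 0 < rC)
    (hsum : 1 < rB + rC) (hℓ : ℓ ∈ Set.Ioo (0:ℝ) 1) :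
    ∃ xA xC xB : ℝ,
      (xA ∈ Set.Icc (0:ℝ) 1 ∧ xC ∈ Set.Icc (0:ℝ) 1 ∧ xB ∈ Set.Icc (0:ℝ) 1 ∧
        xA * rB + xB * rB + xC * rC = 1) ∧
      (∀ yA yC yB : ℝ,
        yA ∈ Set.Icc (0:ℝ) 1 → yC ∈ Set.Icc (0:ℝ) 1 → yB ∈ Set.Icc (0:ℝ) 1 →
        yA * rB + yB * rB + yC * rC = 1 →
        ℓ + 2 * (1 - xC) * (1 - ℓ * xA) + 2 * a * ℓ * (1 - xB)
            + 2 * a * max (1 - xB - xA) 0 ≤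
          ℓ + 2 * (1 - yC) * (1 - ℓ * yA) + 2 * a * ℓ * (1 - yB)
            + 2 * a * max (1 - yB - yA) 0) ∧
      ((¬ (0 < xA ∧ xA < 1) ∧ ¬ (0 < xC ∧ xC < 1)) ∨
       (¬ (0 < xA ∧ xA < 1) ∧ ¬ (0 < xB ∧ xB < 1)) ∨
       (¬ (0 < xC ∧ xC < 1) ∧ ¬ (0 < xB ∧ xB < 1))) := by
  obtain ⟨⟨xA, xC, xB⟩, hx, hmin, hbin⟩ :=
    exists_isMinOn_gapCost_two_binary (a := a) hrB hrC hsum hℓ.1.le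
  obtain ⟨⟨hA, hC, hB⟩, hcon⟩ := mk_mem_gapPolytope.1 hx
  refine ⟨xA, xC, xB, ⟨hA, hC, hB, hcon⟩, fun yA yC yB hyA hyC hyB hy => ?_, hbin⟩
  exact isMinOn_iff.1 hmin _ (mk_mem_gapPolytope.2 ⟨⟨hyA, hyC, hyB⟩, hy⟩)

theorem extremal_minimizer_of_gap_cost
    (rB rC ℓ a : ℝ) (hrB : 0 < rB) (hrC : 0 < rC) (hrB1 : rB < 1)
    (hsum : 1 < rB + rC) (hℓ : ℓ ∈ Set.Ioo (0:ℝ) 1) (ha : a ∈ Set.Ioo (0:ℝ) 1) :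
    ∃ xA xC xB : ℝ,
      (xA ∈ Set.Icc (0:ℝ) 1 ∧ xC ∈ Set.Icc (0:ℝ) 1 ∧ xB ∈ Set.Icc (0:ℝ) 1 ∧
        xA * rB + xB * rB + xC * rC = 1) ∧
      (∀ yA yC yB : ℝ,
        yA ∈ Set.Icc (0:ℝ) 1 → yC ∈ Set.Icc (0:ℝ) 1 → yB ∈ Set.Icc (0:ℝ) 1 →
        yA * rB + yB * rB + yC * rC = 1 →
        ℓ + 2 * (1 - xC) * (1 - ℓ * xA) + 2 * a * ℓ * (1 - xB)
            + 2 * a * max (1 - xB - xA) 0 ≤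
          ℓ + 2 * (1 - yC) * (1 - ℓ * yA) + 2 * a * ℓ * (1 - yB)
            + 2 * a * max (1 - yB - yA) 0) ∧
      ((¬ (0 < xA ∧ xA < 1) ∧ ¬ (0 < xC ∧ xC < 1)) ∨
       (¬ (0 < xA ∧ xA < 1) ∧ ¬ (0 < xB ∧ xB < 1)) ∨
       (¬ (0 < xC ∧ xC < 1) ∧ ¬ (0 < xB ∧ xB < 1))) :=
  extremal_minimizer_of_gap_cost_general rB rC ℓ a hrB hrC hsum hℓ
end
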